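/- Rank-two symplectic determinant identity: let A and B be skew-symmetric n×n real matrices such that I - AB is invertible, let u, v ∈ ℝ^n, set R = u v^T, Q = [[R, 0], [0, R^T]] and P = [[I, B], [A, I]] (as 2n×2n block matrices). Then det(P + Q) = det(P) · (1 + ⟨u, (I - AB)^{-1} v⟩)^2. -/
import Mathlib

open Matrix

/-- The `2k × 2k` block matrix `[[A, B], [C, D]]` built from `k × k` blocks. -/
noncomputable def blockMat {k : ℕ} (A B C D : Matrix (Fin k) (Fin k) ℝ) :
    Matrix (Fin (2 * k)) (Fin (2 * k)) ℝ :=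
  (Matrix.fromBlocks A B C D).submatrix
    (finSumFinEquiv.trans (finCongr (two_mul k).symm)).symm
    (finSumFinEquiv.trans (finCongr (two_mul k).symm)).symm

lemma skew_dot_aux {n : ℕ} (M : Matrix (Fin n) (Fin n) ℝ) (hM : Mᵀ = -M) (x : Fin n → ℝ) :
    x ⬝ᵥ M.mulVec x = 0 := by
  have h1 : x ⬝ᵥ M.mulVec x = M.vecMul x ⬝ᵥ x := Matrix.dotProduct_mulVec x M x
  rw [← Matrix.mulVec_transpose, hM, Matrix.neg_mulVec, neg_dotProduct,
    dotProduct_comm] at h1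
  rw [dotProduct_comm]
  linarith

/-- **Rank-two symplectic determinant identity**: for skew-symmetric `n × n` matrices
`A`, `B` with `I - AB` invertible, `u, v ∈ ℝⁿ`, `R = u vᵀ`, `Q = [[R, 0], [0, Rᵀ]]`
and `P = [[I, B], [A, I]]`, one has
`det (P + Q) = det P * (1 + ⟨u, (I - AB)⁻¹ v⟩)²`. -/
theorem rank_two_symplectic_det (n : ℕ) (A B : Matrix (Fin n) (Fin n) ℝ)
    (hA : Aᵀ = -A) (hB : Bᵀ = -B)
    (h : IsUnit (1 - A * B).det) (u v : Fin n → ℝ) :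
    (blockMat 1 B A 1 +
        blockMat (Matrix.of fun i j => u i * v j) 0 0
          (Matrix.of fun i j => u i * v j)ᵀ).det =
      (blockMat 1 B A 1).det * (1 + u ⬝ᵥ (1 - A * B)⁻¹.mulVec v) ^ 2 := by
  classical
  set D : Matrix (Fin n) (Fin n) ℝ := (1 - A * B)⁻¹ with hDdef
  set E : Matrix (Fin n) (Fin n) ℝ := (1 - B * A)⁻¹ with hEdef
  have htrans : (1 - B * A)ᵀ = 1 - A * B := by
    rw [transpose_sub, transpose_one, transpose_mul, hA, hB]; noncomm_ring
  have hdetE : IsUnit (1 - B * A).det := by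
    rw [← Matrix.det_transpose, htrans]; exact h
  have hE1 : (1 - B * A) * E = 1 := Matrix.mul_nonsing_inv _ hdetE
  have hE2 : E * (1 - B * A) = 1 := Matrix.nonsing_inv_mul _ hdetE
  have hD1 : (1 - A * B) * D = 1 := Matrix.mul_nonsing_inv _ h
  have hD2 : D * (1 - A * B) = 1 := Matrix.nonsing_inv_mul _ h
  have hEt : Eᵀ = D := by rw [hEdef, Matrix.transpose_nonsing_inv, htrans]
  have hDt : Dᵀ = E := by rw [← hEt, transpose_transpose]
  have hDA : D * A = A * E := by
    have key : A * (1 - B * A) = (1 - A * B) * A := by noncomm_ring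
    calc D * A = D * (A * ((1 - B * A) * E)) := by rw [hE1, mul_one]
    _ = D * ((1 - A * B) * A) * E := by rw [← mul_assoc A, key]; noncomm_ring
    _ = (D * (1 - A * B)) * (A * E) := by noncomm_ring
    _ = A * E := by rw [hD2, one_mul]
  have hEB : E * B = B * D := by
    have key : B * (1 - A * B) = (1 - B * A) * B := by noncomm_ring
    calc E * B = E * (B * ((1 - A * B) * D)) := by rw [hD1, mul_one]
    _ = E * ((1 - B * A) * B) * D := by rw [← mul_assoc B, key]; noncomm_ring
    _ = (E * (1 - B * A)) * (B * D) := by noncomm_ring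
    _ = B * D := by rw [hE2, one_mul]
  have skewAE : (A * E)ᵀ = -(A * E) := by
    rw [transpose_mul, hEt, hA, Matrix.mul_neg, hDA]
  have skewBD : (B * D)ᵀ = -(B * D) := by
    rw [transpose_mul, hDt, hB, Matrix.mul_neg, hEB]
  -- auxiliary vectors
  set p : Fin n → ℝ := E.mulVec u with hp
  set q : Fin n → ℝ := (A * E).mulVec u with hq
  set r : Fin n → ℝ := (B * D).mulVec v with hr
  set s : Fin n → ℝ := D.mulVec v with hs
  have h1 : p - B.mulVec q = u := by
    rw [hp, hq, Matrix.mulVec_mulVec, ← Matrix.sub_mulVec]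
    have key : E - B * (A * E) = (1 - B * A) * E := by noncomm_ring
    rw [key, hE1, Matrix.one_mulVec]
  have h2 : A.mulVec p = q := by rw [hp, hq, Matrix.mulVec_mulVec]
  have h3 : B.mulVec s = r := by rw [hs, hr, Matrix.mulVec_mulVec]
  have h4 : s - A.mulVec r = v := by
    rw [hs, hr, Matrix.mulVec_mulVec, ← Matrix.sub_mulVec]
    have key : D - A * (B * D) = (1 - A * B) * D := by noncomm_ring
    rw [key, hD1, Matrix.one_mulVec]
  -- block matrices
  set R : Matrix (Fin n) (Fin n) ℝ := Matrix.of fun i j => u i * v j with hR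
  set U : Matrix (Fin n ⊕ Fin n) (Fin 2) ℝ :=
    Matrix.of (fun i j => if j = 0 then Sum.elim u 0 i else Sum.elim 0 v i) with hU
  set V : Matrix (Fin 2) (Fin n ⊕ Fin n) ℝ :=
    Matrix.of (fun j i => if j = 0 then Sum.elim v 0 i else Sum.elim 0 u i) with hV
  set W : Matrix (Fin n ⊕ Fin n) (Fin 2) ℝ :=
    Matrix.of (fun i j => if j = 0 then Sum.elim p (-q) i else Sum.elim (-r) s i) with hW
  have hUV : U * V = Matrix.fromBlocks R 0 0 Rᵀ := by
    ext i j
    rcases i with i | i <;> rcases j with j | j <;>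
      simp [hU, hV, hR, Matrix.mul_apply, Fin.sum_univ_two, mul_comm]
  have hPW : Matrix.fromBlocks (1 : Matrix (Fin n) (Fin n) ℝ) B A 1 * W = U := by
    ext i j
    fin_cases j <;> rcases i with i | i
    · have h1' := congrFun h1 i
      simp only [Pi.sub_apply, Matrix.mulVec, dotProduct] at h1'
      simp [hU, hW, Matrix.mul_apply, Fintype.sum_sum_type, Matrix.one_apply,
        Finset.sum_ite_eq', mul_neg, Finset.sum_neg_distrib]
      linarith
    · have h2' := congrFun h2 i
      simp only [Matrix.mulVec, dotProduct] at h2'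
      simp [hU, hW, Matrix.mul_apply, Fintype.sum_sum_type, Matrix.one_apply,
        Finset.sum_ite_eq', mul_neg, Finset.sum_neg_distrib]
      linarith
    · have h3' := congrFun h3 i
      simp only [Matrix.mulVec, dotProduct] at h3'
      simp [hU, hW, Matrix.mul_apply, Fintype.sum_sum_type, Matrix.one_apply,
        Finset.sum_ite_eq', mul_neg, Finset.sum_neg_distrib]
      linarith
    · have h4' := congrFun h4 i
      simp only [Pi.sub_apply, Matrix.mulVec, dotProduct] at h4'
      simp [hU, hW, Matrix.mul_apply, Fintype.sum_sum_type, Matrix.one_apply,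
        Finset.sum_ite_eq', mul_neg, Finset.sum_neg_distrib]
      linarith
  have hfact : Matrix.fromBlocks (1 : Matrix (Fin n) (Fin n) ℝ) B A 1 +
      Matrix.fromBlocks R 0 0 Rᵀ =
      Matrix.fromBlocks (1 : Matrix (Fin n) (Fin n) ℝ) B A 1 * (1 + W * V) := by
    rw [mul_add, mul_one, ← Matrix.mul_assoc, hPW, hUV]
  have e00 : (V * W) 0 0 = v ⬝ᵥ p := by
    simp [hV, hW, Matrix.mul_apply, Fintype.sum_sum_type, dotProduct]
  have e01 : (V * W) 0 1 = -(v ⬝ᵥ r) := by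
    simp [hV, hW, Matrix.mul_apply, Fintype.sum_sum_type, dotProduct,
      Finset.sum_neg_distrib, mul_neg]
  have e10 : (V * W) 1 0 = -(u ⬝ᵥ q) := by
    simp [hV, hW, Matrix.mul_apply, Fintype.sum_sum_type, dotProduct,
      Finset.sum_neg_distrib, mul_neg]
  have e11 : (V * W) 1 1 = u ⬝ᵥ s := by
    simp [hV, hW, Matrix.mul_apply, Fintype.sum_sum_type, dotProduct]
  have hz1 : v ⬝ᵥ r = 0 := by rw [hr]; exact skew_dot_aux _ skewBD v
  have hz2 : u ⬝ᵥ q = 0 := by rw [hq]; exact skew_dot_aux _ skewAE u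
  have heq : v ⬝ᵥ p = u ⬝ᵥ s := by
    rw [hp, hs, Matrix.dotProduct_mulVec, ← Matrix.mulVec_transpose, hEt,
      dotProduct_comm]
  have hdet2 : (1 + V * W).det = (1 + u ⬝ᵥ s) ^ 2 := by
    rw [Matrix.det_fin_two]
    simp only [Matrix.add_apply, Matrix.one_apply_eq, Matrix.one_apply_ne (by decide : (0 : Fin 2) ≠ 1),
      Matrix.one_apply_ne (by decide : (1 : Fin 2) ≠ 0), e00, e01, e10, e11, hz1, hz2, heq]
    ring
  -- assemble
  have hsub : blockMat 1 B A 1 + blockMat R 0 0 Rᵀ =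
      (Matrix.fromBlocks (1 : Matrix (Fin n) (Fin n) ℝ) B A 1 +
        Matrix.fromBlocks R 0 0 Rᵀ).submatrix
        (finSumFinEquiv.trans (finCongr (two_mul n).symm)).symm
        (finSumFinEquiv.trans (finCongr (two_mul n).symm)).symm := by
    simp [blockMat, Matrix.submatrix_add]
  rw [hsub, Matrix.det_submatrix_equiv_self, hfact, Matrix.det_mul,
    Matrix.det_one_add_mul_comm, hdet2]
  congr 1
  exact (Matrix.det_submatrix_equiv_self _ _).symm
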